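/- Let C be a polygonal curve with vertices p_0, …, p_m and L(C) > 0. Then for every k = 0, …, m, the displacement of the k-th vertex under one additional respacing step satisfies ‖f(f(p_k)) − f(p_k)‖ ≤ k·(L(C) − L(f(C))), where f(f(p_k)) denotes the k-th vertex of f(f(C)). -/

import Mathlib

/-!
The arclength parameterization `P` of a curve of length `L` is 1-Lipschitz on `[0, L]`, so
consecutive vertices of `f(C)` are at most `L/m` apart. Hence the length `d_k` of `f(C)` up to
its `k`-th vertex is at most `k L / m`, and the rest of `f(C)` has length at most
`(m - k) L / m`. The vertex `f(p_k)` sits at arclength `d_k` on `f(C)` and `f(f(p_k))` at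
arclength `k L(f(C)) / m`, so by the 1-Lipschitz property of the parameterization of `f(C)` their
distance is at most `|k L(f(C)) / m - d_k|`, which the two estimates bound by
`k (L - L(f(C)))`.
-/

open Finset Filter

noncomputable section

/-- The length of the polygonal curve with vertices `p 0, …, p m`
(also the arclength distance from `p 0` to `p m` along the curve). -/
def polyLength {dim : ℕ} (p : ℕ → EuclideanSpace ℝ (Fin dim)) (m : ℕ) : ℝ :=
  ∑ i ∈ Finset.range m, ‖p (i + 1) - p i‖

/-- `P` is the arclength-parameterized linear interpolation of the polygonal
curve with vertices `p 0, …, p m`: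
`P ((1-t)·d_{k-1} + t·d_k) = (1-t)·p_{k-1} + t·p_k` for `t ∈ [0,1]`, `k = 1, …, m`,
where `d_k = polyLength p k` is the arclength up to vertex `k`. -/
def IsArcParam {dim : ℕ} (p : ℕ → EuclideanSpace ℝ (Fin dim)) (m : ℕ)
    (P : ℝ → EuclideanSpace ℝ (Fin dim)) : Prop :=
  ∀ k : ℕ, 1 ≤ k → k ≤ m → ∀ t : ℝ, 0 ≤ t → t ≤ 1 →
    P ((1 - t) * polyLength p (k - 1) + t * polyLength p k)
      = (1 - t) • p (k - 1) + t • p k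

/-- The polygonal curve with vertices `p 0, …, p m` is equilateral:
all consecutive interpoint distances agree. -/
def IsEquilateral {dim : ℕ} (p : ℕ → EuclideanSpace ℝ (Fin dim)) (m : ℕ) : Prop :=
  ∀ k l : ℕ, 1 ≤ k → k ≤ m → 1 ≤ l → l ≤ m →
    ‖p k - p (k - 1)‖ = ‖p l - p (l - 1)‖

/-- `q 0, …, q m` are the vertices of the arclength respacing `f(C)` of the
polygonal curve `C` with vertices `p 0, …, p m`:
`q k = P (k·L(C)/m)` where `P` is the arclength parameterization of `C`;
by convention `f(C) := C` when `L(C) = 0`. -/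
def Respaces {dim : ℕ} (m : ℕ) (p q : ℕ → EuclideanSpace ℝ (Fin dim)) : Prop :=
  (polyLength p m = 0 ∧ ∀ k ≤ m, q k = p k) ∨
  (0 < polyLength p m ∧ ∃ P : ℝ → EuclideanSpace ℝ (Fin dim), IsArcParam p m P ∧
    ∀ k ≤ m, q k = P ((k : ℝ) * polyLength p m / m))

lemma LipschitzOnWith.Icc_union_Icc {E : Type*} [PseudoMetricSpace E] {f : ℝ → E}
    {K : NNReal} {a b c : ℝ} (hab : LipschitzOnWith K f (Set.Icc a b))
    (hbc : LipschitzOnWith K f (Set.Icc b c)) : LipschitzOnWith K f (Set.Icc a c) := by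
  have across : ∀ x ∈ Set.Icc a c, ∀ y ∈ Set.Icc a c, x ≤ b → b ≤ y →
      dist (f x) (f y) ≤ K * dist x y := fun x hx y hy hxb hby => calc
    dist (f x) (f y) ≤ dist (f x) (f b) + dist (f b) (f y) := dist_triangle _ _ _
    _ ≤ K * dist x b + K * dist b y :=
      add_le_add (hab.dist_le_mul x ⟨hx.1, hxb⟩ b ⟨hx.1.trans hxb, le_rfl⟩)
        (hbc.dist_le_mul b ⟨le_rfl, hby.trans hy.2⟩ y ⟨hby, hy.2⟩)
    _ = K * dist x y := by
      rw [← mul_add, Real.dist_eq, Real.dist_eq, Real.dist_eq, abs_of_nonpos (by linarith),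
        abs_of_nonpos (by linarith), abs_of_nonpos (by linarith)]
      ring
  refine LipschitzOnWith.of_dist_le_mul fun x hx y hy => ?_
  rcases le_total x b with hxb | hbx <;> rcases le_total y b with hyb | hby
  · exact hab.dist_le_mul x ⟨hx.1, hxb⟩ y ⟨hy.1, hyb⟩
  · exact across x hx y hy hxb hby
  · rw [dist_comm, dist_comm x]
    exact across y hy x hx hyb hbx
  · exact hbc.dist_le_mul x ⟨hbx, hx.2⟩ y ⟨hby, hy.2⟩

lemma natCast_mul_div_mem_Icc {k m : ℕ} (hkm : k ≤ m) {L : ℝ} (hL : 0 ≤ L) :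
    (k : ℝ) * L / m ∈ Set.Icc 0 L := by
  refine ⟨by positivity, div_le_of_le_mul₀ m.cast_nonneg hL ?_⟩
  rw [mul_comm]
  exact mul_le_mul_of_nonneg_left (Nat.cast_le.2 hkm) hL

section polyLength

variable {dim : ℕ} (p : ℕ → EuclideanSpace ℝ (Fin dim))

lemma polyLength_zero : polyLength p 0 = 0 := Finset.sum_range_zero _

lemma polyLength_succ (k : ℕ) : polyLength p (k + 1) = polyLength p k + ‖p (k + 1) - p k‖ :=
  Finset.sum_range_succ _ _

lemma polyLength_nonneg (m : ℕ) : 0 ≤ polyLength p m :=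
  Finset.sum_nonneg fun _ _ => norm_nonneg _

lemma polyLength_mono : Monotone (polyLength p) := fun _ _ hab =>
  Finset.sum_le_sum_of_subset_of_nonneg (Finset.range_subset_range.2 hab)
    fun _ _ _ => norm_nonneg _

lemma polyLength_sub_polyLength_le {k n : ℕ} (hkn : k ≤ n) {c : ℝ}
    (h : ∀ i, k ≤ i → i < n → ‖p (i + 1) - p i‖ ≤ c) :
    polyLength p n - polyLength p k ≤ ((n : ℝ) - k) * c := by
  rw [polyLength, polyLength, ← Finset.sum_Ico_eq_sub _ hkn, ← Nat.cast_sub hkn,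
    ← Nat.card_Ico, ← nsmul_eq_mul]
  exact Finset.sum_le_card_nsmul _ _ _ fun i hi =>
    h i (Finset.mem_Ico.1 hi).1 (Finset.mem_Ico.1 hi).2

end polyLength

namespace IsArcParam

variable {dim m : ℕ} {p : ℕ → EuclideanSpace ℝ (Fin dim)}
  {P : ℝ → EuclideanSpace ℝ (Fin dim)}

lemma apply_polyLength (hP : IsArcParam p m P) (hm : 0 < m) {j : ℕ} (hj : j ≤ m) :
    P (polyLength p j) = p j := by
  cases j with
  | zero => simpa [polyLength_zero] using hP 1 le_rfl hm 0 le_rfl zero_le_one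
  | succ i => simpa using hP (i + 1) (by omega) hj 1 zero_le_one le_rfl

/-- On a degenerate segment the coefficient is `(x - d) / 0 = 0`, and indeed `x = d` there. -/
lemma eq_on_segment (hP : IsArcParam p m P) {k : ℕ} (hk : k < m) {x : ℝ}
    (hx : x ∈ Set.Icc (polyLength p k) (polyLength p (k + 1))) :
    P x = p k + ((x - polyLength p k) / ‖p (k + 1) - p k‖) • (p (k + 1) - p k) := by
  have h := hP (k + 1) (by omega) hk
  rw [Nat.add_sub_cancel, polyLength_succ] at h
  rw [polyLength_succ] at hx
  set d := polyLength p k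
  set n := ‖p (k + 1) - p k‖
  rcases (norm_nonneg (p (k + 1) - p k)).eq_or_lt with hn | hn
  · have hxd : x = d := le_antisymm (by linarith [hx.2]) hx.1
    simpa [hxd] using h 0 le_rfl zero_le_one
  · set t := (x - d) / n
    have hxt : (1 - t) * d + t * (d + n) = x := by
      rw [show (1 - t) * d + t * (d + n) = d + t * n by ring, div_mul_cancel₀ _ hn.ne']
      ring
    rw [← hxt, h t (div_nonneg (by linarith [hx.1]) hn.le)
      ((div_le_one hn).2 (by linarith [hx.2]))]
    module

lemma lipschitzOnWith_segment (hP : IsArcParam p m P) {k : ℕ} (hk : k < m) :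
    LipschitzOnWith 1 P (Set.Icc (polyLength p k) (polyLength p (k + 1))) := by
  refine LipschitzOnWith.mk_one fun x hx y hy => ?_
  rw [hP.eq_on_segment hk hx, hP.eq_on_segment hk hy, dist_eq_norm, add_sub_add_left_eq_sub,
    ← sub_smul, norm_smul, div_sub_div_same, sub_sub_sub_cancel_right, Real.norm_eq_abs, abs_div,
    abs_norm, ← Real.dist_eq]
  rcases (norm_nonneg (p (k + 1) - p k)).eq_or_lt with hn | hn
  · simp [← hn]
  · rw [div_mul_cancel₀ _ hn.ne']

lemma lipschitzOnWith (hP : IsArcParam p m P) :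
    LipschitzOnWith 1 P (Set.Icc 0 (polyLength p m)) := by
  suffices ∀ k ≤ m, LipschitzOnWith 1 P (Set.Icc 0 (polyLength p k)) from this m le_rfl
  intro k
  induction k with
  | zero =>
    refine fun _ => LipschitzOnWith.mk_one fun x hx y hy => ?_
    rw [Set.subsingleton_Icc_of_ge le_rfl hx hy, dist_self, dist_self]
  | succ k ih =>
    intro hk
    exact (ih (by omega)).Icc_union_Icc (hP.lipschitzOnWith_segment hk)

end IsArcParam

lemma norm_sub_le_of_respaces {dim m : ℕ} {p q : ℕ → EuclideanSpace ℝ (Fin dim)}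
    {P : ℝ → EuclideanSpace ℝ (Fin dim)} (hP : IsArcParam p m P)
    (hq : ∀ k ≤ m, q k = P ((k : ℝ) * polyLength p m / m)) {i : ℕ} (hi : i < m) :
    ‖q (i + 1) - q i‖ ≤ polyLength p m / m := by
  have hL := polyLength_nonneg p m
  rw [hq i hi.le, hq (i + 1) hi, ← dist_eq_norm]
  calc dist (P ((i + 1 : ℕ) * polyLength p m / m)) (P (i * polyLength p m / m))
      ≤ dist ((i + 1 : ℕ) * polyLength p m / m) (i * polyLength p m / m) := by
        simpa using hP.lipschitzOnWith.dist_le_mul _ (natCast_mul_div_mem_Icc hi hL) _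
          (natCast_mul_div_mem_Icc hi.le hL)
    _ = polyLength p m / m := by
        rw [Real.dist_eq, Nat.cast_succ, ← sub_div, ← sub_mul, add_sub_cancel_left, one_mul,
          abs_of_nonneg (by positivity)]

lemma abs_natCast_mul_div_sub_le {k : ℕ} {m L L' d : ℝ} (hkm : k ≤ m) (hd0 : 0 ≤ d)
    (hd : d ≤ k * (L / m)) (ht : L' - d ≤ (m - k) * (L / m)) :
    |k * L' / m - d| ≤ k * (L - L') := by
  rcases k.eq_zero_or_pos with rfl | hk
  · simp only [Nat.cast_zero, zero_mul] at hd
    simp [le_antisymm hd hd0]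
  -- `k` is a natural number, so `(m - k) / m ≤ 1 ≤ k`; this fails for `0 < k < 1`.
  have hk1 : (1 : ℝ) ≤ k := by exact_mod_cast hk
  have hm : 0 < m := by linarith
  obtain ⟨a, rfl⟩ : ∃ a, L = m * a := ⟨L / m, by field_simp⟩
  obtain ⟨b, rfl⟩ : ∃ b, L' = m * b := ⟨L' / m, by field_simp⟩
  simp only [mul_div_cancel_left₀ _ hm.ne', mul_div_assoc] at hd ht ⊢
  have hba : b ≤ a := by nlinarith
  rw [abs_sub_le_iff]
  constructor <;> nlinarith [mul_le_mul_of_nonneg_right hk1 (sub_nonneg.2 hba)]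

theorem stmt13_general {dim m : ℕ} (p : ℕ → EuclideanSpace ℝ (Fin dim))
    (P : ℝ → EuclideanSpace ℝ (Fin dim)) (hP : IsArcParam p m P)
    (q : ℕ → EuclideanSpace ℝ (Fin dim))
    (hq : ∀ k ≤ m, q k = P ((k : ℝ) * polyLength p m / m))
    (r : ℕ → EuclideanSpace ℝ (Fin dim))
    (hr : Respaces m q r) :
    ∀ k ≤ m, ‖r k - q k‖ ≤ (k : ℝ) * (polyLength p m - polyLength q m) := by
  intro k hk
  rcases hr with ⟨hq0, hrq⟩ | ⟨hqpos, Q, hQ, hrQ⟩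
  · rw [hrq k hk, sub_self, norm_zero, hq0, sub_zero]
    exact mul_nonneg k.cast_nonneg (polyLength_nonneg p m)
  have hm : 0 < m := Nat.pos_of_ne_zero fun h => by simp [h, polyLength_zero] at hqpos
  have hhead := polyLength_sub_polyLength_le q (Nat.zero_le k) fun i _ hi =>
    norm_sub_le_of_respaces hP hq (hi.trans_le hk)
  have htail := polyLength_sub_polyLength_le q hk fun i _ hi => norm_sub_le_of_respaces hP hq hi
  rw [hrQ k hk, ← hQ.apply_polyLength hm hk, ← dist_eq_norm]
  calc dist (Q (k * polyLength q m / m)) (Q (polyLength q k))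
      ≤ dist ((k : ℝ) * polyLength q m / m) (polyLength q k) := by
        simpa using hQ.lipschitzOnWith.dist_le_mul _
          (natCast_mul_div_mem_Icc hk (polyLength_nonneg q m)) _
          ⟨polyLength_nonneg q k, polyLength_mono q hk⟩
    _ ≤ k * (polyLength p m - polyLength q m) := by
        rw [Real.dist_eq]
        refine abs_natCast_mul_div_sub_le (Nat.cast_le.2 hk) (polyLength_nonneg q k) ?_ htail
        simpa [polyLength_zero] using hhead

/-- The displacement of the `k`-th vertex under one additional respacing step
is at most `k·(L(C) - L(f(C)))`. -/
theorem stmt13 {dim m : ℕ} (hm : 1 ≤ m) (p : ℕ → EuclideanSpace ℝ (Fin dim))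
    (hL : 0 < polyLength p m)
    (P : ℝ → EuclideanSpace ℝ (Fin dim)) (hP : IsArcParam p m P)
    (q : ℕ → EuclideanSpace ℝ (Fin dim))
    (hq : ∀ k ≤ m, q k = P ((k : ℝ) * polyLength p m / m))
    (r : ℕ → EuclideanSpace ℝ (Fin dim))
    (hr : Respaces m q r) :
    ∀ k ≤ m, ‖r k - q k‖ ≤ (k : ℝ) * (polyLength p m - polyLength q m) :=
  stmt13_general p P hP q hq r hr
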